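/- Verification theorem for discrete Volterra control: if V satisfies the dynamic programming recursion and a control u* satisfies V(i, ũ*₍ᵢ₎) = J_{i, ũ*₍ᵢ₎}(u*_{⟨i⟩}) for all i ∈ {0,1,…,N}, then u* is optimal: J(u*) ≤ J(u) for every admissible control u, where J(u) := J_{0,∅}(u). -/
import Mathlib


/-- Solution of the discrete controlled Volterra equation
`x k = x₀ k + ∑_{j<k} φ k j (x j) (u j)`. -/
noncomputable def traj {E U : Type*} [AddCommGroup E]
    (x₀ : ℕ → E) (φ : ℕ → ℕ → E → U → E) (u : ℕ → U) : ℕ → E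
  | k => x₀ k + ∑ j : Fin k, φ k j (traj x₀ φ u j) (u j)
  termination_by k => k
  decreasing_by exact j.isLt

/-- Parametrized cost `J_{i,β}(γ)`: the trajectory uses the prefix control `β`
on indices `< i` and the suffix control `γ` on indices `≥ i`, and the costs
accumulated are `∑_{j=i}^{N-1} Φ(j, x(j), γ j) + Φ₀(x N)`. -/
noncomputable def Jcost {E U : Type*} [AddCommGroup E] (N : ℕ)
    (x₀ : ℕ → E) (φ : ℕ → ℕ → E → U → E) (Φ : ℕ → E → U → ℝ) (Φ₀ : E → ℝ)
    (i : ℕ) (β γ : ℕ → U) : ℝ :=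
  (∑ j ∈ Finset.Ico i N,
      Φ j (traj x₀ φ (fun k => if k < i then β k else γ k) j) (γ j)) +
    Φ₀ (traj x₀ φ (fun k => if k < i then β k else γ k) N)

/-- `traj` at time `k` depends only on the control at times `< k`. -/
lemma traj_congr {E U : Type*} [AddCommGroup E]
    (x₀ : ℕ → E) (φ : ℕ → ℕ → E → U → E) (u v : ℕ → U) :
    ∀ k, (∀ j < k, u j = v j) → traj x₀ φ u k = traj x₀ φ v k := by
  intro k
  induction k using Nat.strong_induction_on with
  | _ k ih =>
    intro h
    rw [traj, traj]
    congr 1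
    apply Finset.sum_congr rfl
    intro j _
    rw [ih j j.isLt (fun m hm => h m (hm.trans j.isLt)), h j j.isLt]

/-- Verification theorem for discrete Volterra control (Theorem 2.2, second
assertion): if `V` satisfies the dynamic programming recursion and the control
`u*` satisfies `V i ũ*₍ᵢ₎ = J_{i,ũ*₍ᵢ₎}(u*_{⟨i⟩})` for all `i ≤ N`, then `u*`
is optimal: `J(u*) ≤ J(u)` for every admissible control `u`, where
`J(u) = J_{0,∅}(u)`. -/
theorem stmt8 {E U : Type*} [AddCommGroup E] [Fintype U] [Nonempty U] (N : ℕ)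
    (x₀ : ℕ → E) (φ : ℕ → ℕ → E → U → E) (Φ : ℕ → E → U → ℝ) (Φ₀ : E → ℝ)
    (V : ℕ → (ℕ → U) → ℝ)
    (hterm : ∀ β : ℕ → U, V N β = Φ₀ (traj x₀ φ β N))
    (hrec : ∀ i < N, ∀ β : ℕ → U,
      V i β = ⨅ ξ : U, (V (i + 1) (Function.update β i ξ) +
        Φ i (traj x₀ φ β i) ξ))
    (ustar : ℕ → U)
    (hopt : ∀ i ≤ N, V i ustar = Jcost N x₀ φ Φ Φ₀ i ustar ustar) :
    ∀ u : ℕ → U, Jcost N x₀ φ Φ Φ₀ 0 ustar ustar ≤ Jcost N x₀ φ Φ Φ₀ 0 u u := by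
  intro u
  -- V i depends only on the control below i
  have Vcongr : ∀ d i, i + d = N → ∀ β β' : ℕ → U,
      (∀ k < i, β k = β' k) → V i β = V i β' := by
    intro d
    induction d with
    | zero =>
      intro i hi β β' h
      subst hi
      simp only [Nat.add_zero] at *
      rw [hterm, hterm, traj_congr x₀ φ β β' i h]
    | succ d ih =>
      intro i hi β β' h
      have hiN : i < N := by omega
      rw [hrec i hiN β, hrec i hiN β']
      congr 1
      funext ξ
      have hup : ∀ k < i + 1, Function.update β i ξ k = Function.update β' i ξ k := by
        intro k hk
        rcases eq_or_ne k i with rfl | hne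
        · simp
        · rw [Function.update_of_ne hne, Function.update_of_ne hne]
          exact h k (by omega)
      rw [traj_congr x₀ φ β β' i h, ih (i + 1) (by omega) _ _ hup]
  -- Jcost i u u with identical prefix/suffix simplifies
  have Jsimp : ∀ i, Jcost N x₀ φ Φ Φ₀ i u u =
      (∑ j ∈ Finset.Ico i N, Φ j (traj x₀ φ u j) (u j)) + Φ₀ (traj x₀ φ u N) := by
    intro i
    unfold Jcost
    simp [ite_self]
  -- DP inequality: V i u ≤ Jcost i u u
  have key : ∀ d i, i + d = N → V i u ≤ Jcost N x₀ φ Φ Φ₀ i u u := by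
    intro d
    induction d with
    | zero =>
      intro i hi
      subst hi
      simp only [Nat.add_zero] at *
      rw [hterm, Jsimp]
      simp
    | succ d ih =>
      intro i hi
      have hiN : i < N := by omega
      rw [hrec i hiN u]
      have h1 : (⨅ ξ : U, (V (i + 1) (Function.update u i ξ) +
          Φ i (traj x₀ φ u i) ξ)) ≤
          V (i + 1) (Function.update u i (u i)) + Φ i (traj x₀ φ u i) (u i) :=
        ciInf_le (Finite.bddBelow_range _) (u i)
      rw [Function.update_eq_self] at h1
      refine h1.trans ?_
      have h2 := ih (i + 1) (by omega)
      rw [Jsimp] at h2 ⊢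
      have hsplit : ∑ j ∈ Finset.Ico i N, Φ j (traj x₀ φ u j) (u j) =
          Φ i (traj x₀ φ u i) (u i) +
            ∑ j ∈ Finset.Ico (i + 1) N, Φ j (traj x₀ φ u j) (u j) := by
        exact Finset.sum_eq_sum_Ico_succ_bot hiN _
      rw [hsplit]
      linarith
  have h0 : V 0 ustar = V 0 u := Vcongr N 0 (by omega) ustar u (by omega)
  calc Jcost N x₀ φ Φ Φ₀ 0 ustar ustar = V 0 ustar := (hopt 0 (Nat.zero_le N)).symm
    _ = V 0 u := h0
    _ ≤ Jcost N x₀ φ Φ Φ₀ 0 u u := key N 0 (by omega)
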